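/- arXiv:1205.3976 — 4 statements merged into one kernel-verified Lean document; each statement's English description precedes it below -/
import Mathlib

section
/- Let 𝔤 be a finite-dimensional Lie algebra over ℂ and let (h,e,f) be an sl₂-triple in 𝔤. Then ad(e) maps 𝔤₀ onto 𝔤₂: for every Y ∈ 𝔤 with ⁅h,Y⁆ = 2·Y there exists Z ∈ 𝔤 with ⁅h,Z⁆ = 0 and ⁅e,Z⁆ = Y. (This is the second surjectivity assertion of the paper's Lemma on the associated parabolic: ad_N : 𝔩 → 𝔤₂ is onto.) -/
/-!
The element `Ω = 2(ef + fe) + h²` commutes with `e`, `f` and `h`. Let `⁅h, m⁆ = μ • m` with `μ`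
not a non-positive integer and `⁅e, ⁅f, m⁆⁆ = 0`. Then `⁅f, m⁆` is killed by `e`, so `Ω` acts on
it by `(μ - 2)μ`; since `f` is injective on the `μ`-weight space (a vector it kills is primitive
of weight `-μ` for the triple `(-h, f, e)`), `Ω` acts on `m` by `μ(μ - 2)` as well. If `m ≠ 0`,
climbing with `e` reaches a primitive vector of weight `μ + 2k`, on which `Ω` acts by
`(μ + 2k)(μ + 2k + 2)`; comparing gives `4(k + 1)(μ + k) = 0`, which is impossible. So `e ∘ f` is
injective, hence bijective, on the finite-dimensional `μ`-weight space; for `μ = 2` this says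
that `ad e` maps `𝔤₀` onto `𝔤₂`.
-/

open LieModule Module

section Casimir

variable {A : Type*} [Ring A]

/-- Twice the Casimir element `ef + fe + h²/2` of `𝔰𝔩₂`, so that no division by `2` is needed. -/
def sl2Casimir (H E F : A) : A := 2 • (E * F + F * E) + H * H

variable {H E F : A}

lemma commute_e_sl2Casimir (hEF : E * F - F * E = H) (hHE : H * E - E * H = 2 • E) :
    Commute E (sl2Casimir H E F) := by
  rw [Commute, SemiconjBy, ← sub_eq_zero, sl2Casimir]
  linear_combination (norm := noncomm_ring) 2 • (E * hEF + hEF * E) - (hHE * H + H * hHE)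

lemma commute_f_sl2Casimir (hEF : E * F - F * E = H) (hHF : H * F - F * H = -(2 • F)) :
    Commute F (sl2Casimir H E F) := by
  rw [Commute, SemiconjBy, ← sub_eq_zero, sl2Casimir]
  linear_combination (norm := noncomm_ring) -(2 • (F * hEF + hEF * F)) - (hHF * H + H * hHF)

lemma commute_h_sl2Casimir (hHE : H * E - E * H = 2 • E) (hHF : H * F - F * H = -(2 • F)) :
    Commute H (sl2Casimir H E F) := by
  rw [Commute, SemiconjBy, ← sub_eq_zero, sl2Casimir]
  linear_combination (norm := noncomm_ring) 2 • (hHE * F + E * hHF + hHF * E + F * hHE)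

end Casimir

lemma LieModule.toEnd_mul_sub_mul {R L M : Type*} [CommRing R] [LieRing L] [LieAlgebra R L]
    [AddCommGroup M] [Module R M] [LieRingModule L M] [LieModule R L M] (x y : L) :
    toEnd R L M x * toEnd R L M y - toEnd R L M y * toEnd R L M x = toEnd R L M ⁅x, y⁆ := by
  ext m
  simp

namespace IsSl2Triple

section CommRing

variable {R L M : Type*} [CommRing R] [LieRing L] [LieAlgebra R L]
  [AddCommGroup M] [Module R M] [LieRingModule L M] [LieModule R L M]
  {h e f : L} (t : IsSl2Triple h e f) {m : M} {μ : R}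

local notation "Ω" => sl2Casimir (toEnd R L M h) (toEnd R L M e) (toEnd R L M f)

include t

lemma commute_toEnd_e_sl2Casimir : Commute (toEnd R L M e) Ω :=
  commute_e_sl2Casimir (by rw [toEnd_mul_sub_mul, t.lie_e_f])
    (by rw [toEnd_mul_sub_mul, t.lie_h_e_nsmul, map_nsmul])

lemma commute_toEnd_f_sl2Casimir : Commute (toEnd R L M f) Ω :=
  commute_f_sl2Casimir (by rw [toEnd_mul_sub_mul, t.lie_e_f])
    (by rw [toEnd_mul_sub_mul, t.lie_h_f_nsmul, map_neg, map_nsmul])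

lemma commute_toEnd_h_sl2Casimir : Commute (toEnd R L M h) Ω :=
  commute_h_sl2Casimir (by rw [toEnd_mul_sub_mul, t.lie_h_e_nsmul, map_nsmul])
    (by rw [toEnd_mul_sub_mul, t.lie_h_f_nsmul, map_neg, map_nsmul])

lemma lie_h_lie_f (hm : ⁅h, m⁆ = μ • m) : ⁅h, ⁅f, m⁆⁆ = (μ - 2) • ⁅f, m⁆ := by
  rw [leibniz_lie, t.lie_h_f_nsmul, hm, lie_smul, neg_lie, nsmul_lie]
  module

lemma lie_h_sl2Casimir_apply (hm : ⁅h, m⁆ = μ • m) : ⁅h, Ω m⁆ = μ • Ω m := by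
  rw [← toEnd_apply_apply R, ← Module.End.mul_apply, t.commute_toEnd_h_sl2Casimir.eq,
    Module.End.mul_apply, toEnd_apply_apply, hm, map_smul]

lemma sl2Casimir_apply_of_lie_e_eq_zero (hm : ⁅h, m⁆ = μ • m) (he : ⁅e, m⁆ = 0) :
    Ω m = (μ * (μ + 2)) • m := by
  have hef : ⁅e, ⁅f, m⁆⁆ = μ • m := by rw [leibniz_lie, t.lie_e_f, he, lie_zero, add_zero, hm]
  simp only [sl2Casimir, LinearMap.add_apply, LinearMap.smul_apply, Module.End.mul_apply,
    toEnd_apply_apply, hef, he, lie_zero, hm, lie_smul]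
  module

section Noetherian

variable [IsDomain R] [CharZero R] [IsNoetherian R M] [IsTorsionFree R M]

lemma eq_zero_of_lie_f_eq_zero (hμ : ∀ n : ℕ, μ ≠ -n) (hm : ⁅h, m⁆ = μ • m) (hf : ⁅f, m⁆ = 0) :
    m = 0 := by
  by_contra hm₀
  have P : t.symm.HasPrimitiveVectorWith m (-μ) := ⟨hm₀, by rw [neg_lie, hm, neg_smul], hf⟩
  obtain ⟨n, hn⟩ := P.exists_nat
  exact hμ n (neg_eq_iff_eq_neg.mp hn)

lemma exists_hasPrimitiveVectorWith_pow_toEnd_e (hm₀ : m ≠ 0) (hm : ⁅h, m⁆ = μ • m) :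
    ∃ k : ℕ, t.HasPrimitiveVectorWith ((toEnd R L M e ^ k) m) (μ + 2 * k) := by
  have h_exists_zero : ∃ k : ℕ, (toEnd R L M e ^ k) m = 0 := by
    by_contra! hne
    have hli := (toEnd R L M h).eigenvectors_linearIndependent' (fun k : ℕ ↦ μ + 2 * k)
      (fun a b hab ↦ by simpa using hab) (fun k ↦ (toEnd R L M e ^ k) m)
      (fun k ↦ ⟨Module.End.mem_eigenspace_iff.mpr (t.lie_h_pow_toEnd_e hm k), hne k⟩)
    have := hli.finite_of_isNoetherian
    exact not_finite ℕ
  obtain ⟨k, hk, hk₁⟩ := Nat.exists_not_and_succ_of_not_zero_of_exists hm₀ h_exists_zero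
  exact ⟨k, hk, t.lie_h_pow_toEnd_e hm k, by rwa [lie_e_pow_toEnd_e]⟩

lemma sl2Casimir_apply_of_lie_e_lie_f_eq_zero (hμ : ∀ n : ℕ, μ ≠ -n) (hm : ⁅h, m⁆ = μ • m)
    (hef : ⁅e, ⁅f, m⁆⁆ = 0) : Ω m = (μ * (μ - 2)) • m := by
  rw [← sub_eq_zero]
  refine t.eq_zero_of_lie_f_eq_zero hμ ?_ ?_
  · rw [lie_sub, lie_smul, t.lie_h_sl2Casimir_apply hm, hm, smul_comm, smul_sub]
  · have hΩf : Ω ⁅f, m⁆ = ((μ - 2) * μ) • ⁅f, m⁆ := by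
      simpa using t.sl2Casimir_apply_of_lie_e_eq_zero (t.lie_h_lie_f hm) hef
    rw [lie_sub, lie_smul, ← toEnd_apply_apply R L M f, ← Module.End.mul_apply,
      t.commute_toEnd_f_sl2Casimir.eq, Module.End.mul_apply, toEnd_apply_apply, hΩf, mul_comm,
      sub_self]

lemma exists_nat_of_sl2Casimir_apply_eq_smul {c : R} (hm₀ : m ≠ 0) (hm : ⁅h, m⁆ = μ • m)
    (hc : Ω m = c • m) : ∃ k : ℕ, c = (μ + 2 * k) * (μ + 2 * k + 2) := by
  obtain ⟨k, P⟩ := t.exists_hasPrimitiveVectorWith_pow_toEnd_e hm₀ hm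
  refine ⟨k, smul_left_injective R P.ne_zero ?_⟩
  dsimp only
  rw [← t.sl2Casimir_apply_of_lie_e_eq_zero P.lie_h P.lie_e, ← Module.End.mul_apply,
    ← (t.commute_toEnd_e_sl2Casimir.pow_left k).eq, Module.End.mul_apply, hc, map_smul]

lemma eq_zero_of_lie_e_lie_f_eq_zero (hμ : ∀ n : ℕ, μ ≠ -n) (hm : ⁅h, m⁆ = μ • m)
    (hef : ⁅e, ⁅f, m⁆⁆ = 0) : m = 0 := by
  by_contra hm₀
  obtain ⟨k, hk⟩ := t.exists_nat_of_sl2Casimir_apply_eq_smul hm₀ hm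
    (t.sl2Casimir_apply_of_lie_e_lie_f_eq_zero hμ hm hef)
  have : (4 : R) * ((k + 1) * (μ + k)) = 0 := by linear_combination -hk
  simp only [mul_eq_zero, OfNat.ofNat_ne_zero, Nat.cast_add_one_ne_zero, false_or] at this
  exact hμ k (eq_neg_of_add_eq_zero_left this)

end Noetherian

end CommRing

section Field

variable {K L M : Type*} [Field K] [CharZero K] [LieRing L] [LieAlgebra K L]
  [AddCommGroup M] [Module K M] [LieRingModule L M] [LieModule K L M] [FiniteDimensional K M]
  {h e f : L} (t : IsSl2Triple h e f) {m : M} {μ : K}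

include t

lemma exists_lie_e_lie_f_eq (hμ : ∀ n : ℕ, μ ≠ -n) (hm : ⁅h, m⁆ = μ • m) :
    ∃ m' : M, ⁅h, m'⁆ = μ • m' ∧ ⁅e, ⁅f, m'⁆⁆ = m := by
  let V := (toEnd K L M h).eigenspace μ
  have hV (x : M) : x ∈ V ↔ ⁅h, x⁆ = μ • x := by
    rw [Module.End.mem_eigenspace_iff, toEnd_apply_apply]
  let φ : V →ₗ[K] V := (toEnd K L M e * toEnd K L M f).restrict fun x hx ↦ (hV _).2 <| by
    simpa using t.lie_h_pow_toEnd_e (t.lie_h_lie_f ((hV x).1 hx)) 1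
  have hφ : Function.Injective φ := by
    rw [injective_iff_map_eq_zero]
    rintro ⟨x, hx⟩ hφx
    exact Subtype.ext <|
      t.eq_zero_of_lie_e_lie_f_eq_zero hμ ((hV x).1 hx) (congrArg Subtype.val hφx)
  obtain ⟨⟨m', hm'⟩, hφm'⟩ := LinearMap.injective_iff_surjective.mp hφ ⟨m, (hV m).2 hm⟩
  exact ⟨m', (hV m').1 hm', congrArg Subtype.val hφm'⟩

end Field

end IsSl2Triple

/-- Let 𝔤 be a finite-dimensional Lie algebra over ℂ and let (h,e,f) be an sl₂-triple in 𝔤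
(e ≠ 0, ⁅h,e⁆ = 2e, ⁅h,f⁆ = −2f, ⁅e,f⁆ = h).  Then ad(e) maps 𝔤₀ onto 𝔤₂: for every Y with
⁅h,Y⁆ = 2•Y there exists Z with ⁅h,Z⁆ = 0 and ⁅e,Z⁆ = Y. -/
theorem ad_e_maps_zero_weight_onto_two_weight
    {L : Type*} [LieRing L] [LieAlgebra ℂ L] [FiniteDimensional ℂ L]
    (h e f : L) (he : e ≠ 0)
    (hHE : ⁅h, e⁆ = (2 : ℂ) • e) (hHF : ⁅h, f⁆ = (-2 : ℂ) • f)
    (hEF : ⁅e, f⁆ = h)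
    (Y : L) (hY : ⁅h, Y⁆ = (2 : ℂ) • Y) :
    ∃ Z : L, ⁅h, Z⁆ = 0 ∧ ⁅e, Z⁆ = Y := by
  have t : IsSl2Triple h e f :=
    { h_ne_zero := by
        rintro rfl
        exact he (by simpa using hHE.symm)
      lie_e_f := hEF
      lie_h_e_nsmul := by rw [hHE, two_smul, two_smul]
      lie_h_f_nsmul := by rw [hHF, neg_smul, two_smul, two_smul] }
  have h2 : ∀ n : ℕ, (2 : ℂ) ≠ -n := fun n hn ↦ by norm_cast at hn; simp at hn
  obtain ⟨Z, hZ, rfl⟩ := t.exists_lie_e_lie_f_eq h2 hY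
  exact ⟨⁅f, Z⁆, by rw [t.lie_h_lie_f hZ, sub_self, zero_smul], rfl⟩
end

section
/- Let 𝔤 be a finite-dimensional Lie algebra over ℂ and let (h,e,f) be an sl₂-triple in 𝔤. Then ad(e) maps ⊕_{i≥1} 𝔤_i onto ⊕_{i≥3} 𝔤_i: every element of the submodule of 𝔤 generated by the eigenspaces of ad(h) for integer eigenvalues i ≥ 3 is of the form ⁅e,Z⁆ for some Z in the submodule generated by the eigenspaces of ad(h) for integer eigenvalues i ≥ 1. (This is the first surjectivity assertion of the paper's Lemma on the associated parabolic: ad_N : 𝔲_P → ⊕_{i≥3} 𝔤_i is onto.) -/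
/-!
Write `T = ad e ∘ ad f`. It preserves each eigenspace `𝔤_c` of `ad h`, so it suffices to show
that `T` is injective on `𝔤_c` for `c ≥ 1`: then it is onto `𝔤_c` by finite-dimensionality,
and `𝔤_c = ad e (ad f 𝔤_c) ⊆ ad e 𝔤_{c-2}`. If `v ∈ 𝔤_c` and `T v = 0`, the vectors
`vₖ = (ad e)ᵏ v` satisfy `⁅f, vₖ₊₁⁆ = -(k+1)(c+k) vₖ`, as for a lowest weight vector. They
have the distinct eigenvalues `c + 2k`, so they eventually vanish; at the last nonzero `vₖ`
this forces `c + k = 0`, which is impossible for `c ≥ 1`.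
-/

open LieAlgebra Module.End

section SlTwoTriple

variable {K L : Type*} [Field K] [LieRing L] [LieAlgebra K L] {h e f : L}

lemma mem_eigenspace_ad_iff {x : L} {a : K} : x ∈ eigenspace (ad K L h) a ↔ ⁅h, x⁆ = a • x := by
  rw [mem_eigenspace_iff, ad_apply]

lemma lie_mem_eigenspace_ad {x v : L} {a c : K}
    (hx : x ∈ eigenspace (ad K L h) a) (hv : v ∈ eigenspace (ad K L h) c) :
    ⁅x, v⁆ ∈ eigenspace (ad K L h) (a + c) := by
  rw [mem_eigenspace_ad_iff] at hx hv ⊢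
  rw [leibniz_lie, hx, hv, smul_lie, lie_smul, add_smul, add_comm]

lemma ad_pow_apply_mem_eigenspace {x v : L} {a c : K}
    (hx : x ∈ eigenspace (ad K L h) a) (hv : v ∈ eigenspace (ad K L h) c) (k : ℕ) :
    (ad K L x ^ k) v ∈ eigenspace (ad K L h) (k * a + c) := by
  induction k with
  | zero => simpa using hv
  | succ k ih =>
    rw [pow_succ', mul_apply, Nat.cast_succ, add_one_mul, add_comm _ a, add_assoc]
    exact lie_mem_eigenspace_ad hx ih

lemma exists_ad_pow_apply_eq_zero [CharZero K] [FiniteDimensional K L] {x v : L} {a c : K}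
    (ha : a ≠ 0) (hx : x ∈ eigenspace (ad K L h) a) (hv : v ∈ eigenspace (ad K L h) c) :
    ∃ k : ℕ, (ad K L x ^ k) v = 0 := by
  by_contra! hne
  have hinj : Function.Injective fun k : ℕ ↦ (k : K) * a + c := fun k l hkl ↦ by
    simpa [ha] using hkl
  exact Module.Finite.not_linearIndependent_of_infinite _
    ((ad K L h).eigenvectors_linearIndependent' _ hinj _
      fun k ↦ ⟨ad_pow_apply_mem_eigenspace hx hv k, hne k⟩)

lemma lie_ad_pow_succ_of_lie_lie_eq_zero (hHE : ⁅h, e⁆ = (2 : K) • e) (hEF : ⁅e, f⁆ = h)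
    {v : L} {c : K} (hv : v ∈ eigenspace (ad K L h) c) (hefv : ⁅e, ⁅f, v⁆⁆ = 0) (k : ℕ) :
    ⁅f, (ad K L e ^ (k + 1)) v⁆ = (-((k + 1) * (c + k))) • (ad K L e ^ k) v := by
  have hfe : ⁅f, e⁆ = -h := by rw [← lie_skew, hEF]
  have he : e ∈ eigenspace (ad K L h) 2 := mem_eigenspace_ad_iff.mpr hHE
  induction k with
  | zero =>
    rw [mem_eigenspace_ad_iff] at hv
    simp [leibniz_lie f e v, hfe, hv, hefv, ← neg_smul]
  | succ k ih =>
    have hk := ad_pow_apply_mem_eigenspace he hv (k + 1)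
    rw [mem_eigenspace_ad_iff] at hk
    rw [pow_succ' _ (k + 1), mul_apply, ad_apply, leibniz_lie, hfe, neg_lie, hk, ih, lie_smul,
      ← ad_apply K, ← mul_apply, ← pow_succ', ← neg_smul, ← add_smul]
    congr 1
    push_cast
    ring

lemma eq_zero_of_lie_lie_eq_zero [CharZero K] [FiniteDimensional K L]
    (hHE : ⁅h, e⁆ = (2 : K) • e) (hEF : ⁅e, f⁆ = h) {v : L} {c : K}
    (hc : ∀ n : ℕ, c + n ≠ 0) (hv : v ∈ eigenspace (ad K L h) c) (hefv : ⁅e, ⁅f, v⁆⁆ = 0) :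
    v = 0 := by
  have he : e ∈ eigenspace (ad K L h) 2 := mem_eigenspace_ad_iff.mpr hHE
  by_contra hv0
  obtain ⟨k, hk, hk1⟩ := Nat.exists_not_and_succ_of_not_zero_of_exists
    (p := fun k ↦ (ad K L e ^ k) v = 0) (by simpa using hv0)
    (exists_ad_pow_apply_eq_zero two_ne_zero he hv)
  have hlast := lie_ad_pow_succ_of_lie_lie_eq_zero hHE hEF hv hefv k
  rw [hk1, lie_zero, eq_comm, smul_eq_zero, neg_eq_zero, mul_eq_zero] at hlast
  exact hlast.elim (·.elim (Nat.cast_add_one_ne_zero k) (hc k)) hk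

lemma exists_lie_lie_eq [CharZero K] [FiniteDimensional K L]
    (hHE : ⁅h, e⁆ = (2 : K) • e) (hHF : ⁅h, f⁆ = (-2 : K) • f) (hEF : ⁅e, f⁆ = h)
    {v : L} {c : K} (hc : ∀ n : ℕ, c + n ≠ 0) (hv : v ∈ eigenspace (ad K L h) c) :
    ∃ u ∈ eigenspace (ad K L h) c, ⁅e, ⁅f, u⁆⁆ = v := by
  have he : e ∈ eigenspace (ad K L h) 2 := mem_eigenspace_ad_iff.mpr hHE
  have hf : f ∈ eigenspace (ad K L h) (-2) := mem_eigenspace_ad_iff.mpr hHF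
  have hmaps : ∀ u ∈ eigenspace (ad K L h) c, (ad K L e ∘ₗ ad K L f) u ∈ eigenspace (ad K L h) c :=
    fun u hu ↦ by
      simpa using lie_mem_eigenspace_ad he (lie_mem_eigenspace_ad hf hu)
  have hinj : Set.InjOn (ad K L e ∘ₗ ad K L f) (eigenspace (ad K L h) c) := by
    intro u hu w hw huw
    rw [← sub_eq_zero]
    refine eq_zero_of_lie_lie_eq_zero hHE hEF hc (sub_mem hu hw) ?_
    simpa [sub_eq_zero] using huw
  obtain ⟨u, hu, rfl⟩ := (LinearMap.injOn_iff_surjOn hmaps).mp hinj hv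
  exact ⟨u, hu, rfl⟩

lemma eigenspace_le_map_ad_eigenspace_sub_two [CharZero K] [FiniteDimensional K L]
    (hHE : ⁅h, e⁆ = (2 : K) • e) (hHF : ⁅h, f⁆ = (-2 : K) • f) (hEF : ⁅e, f⁆ = h)
    {c : K} (hc : ∀ n : ℕ, c + n ≠ 0) :
    eigenspace (ad K L h) c ≤ (eigenspace (ad K L h) (c - 2)).map (ad K L e) := by
  intro v hv
  obtain ⟨u, hu, rfl⟩ := exists_lie_lie_eq hHE hHF hEF hc hv
  have hf : f ∈ eigenspace (ad K L h) (-2) := mem_eigenspace_ad_iff.mpr hHF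
  exact ⟨⁅f, u⁆, by simpa [neg_add_eq_sub] using lie_mem_eigenspace_ad hf hu, rfl⟩

end SlTwoTriple

theorem ad_e_maps_pos_part_onto_high_part_general
    {L : Type*} [LieRing L] [LieAlgebra ℂ L] [FiniteDimensional ℂ L]
    (h e f : L)
    (hHE : ⁅h, e⁆ = (2 : ℂ) • e) (hHF : ⁅h, f⁆ = (-2 : ℂ) • f)
    (hEF : ⁅e, f⁆ = h)
    (Y : L)
    (hY : Y ∈ ⨆ i ∈ Set.Ici (3 : ℤ),
      Module.End.eigenspace (LieAlgebra.ad ℂ L h) (i : ℂ)) :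
    ∃ Z ∈ ⨆ i ∈ Set.Ici (1 : ℤ),
      Module.End.eigenspace (LieAlgebra.ad ℂ L h) (i : ℂ), ⁅e, Z⁆ = Y := by
  suffices (⨆ i ∈ Set.Ici (3 : ℤ), eigenspace (ad ℂ L h) (i : ℂ)) ≤
      (⨆ i ∈ Set.Ici (1 : ℤ), eigenspace (ad ℂ L h) (i : ℂ)).map (ad ℂ L e) from this hY
  refine iSup₂_le fun i hi ↦ ?_
  have hc : ∀ n : ℕ, (i : ℂ) + n ≠ 0 := fun n ↦ by
    exact_mod_cast (show i + n ≠ 0 by grind)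
  refine (eigenspace_le_map_ad_eigenspace_sub_two hHE hHF hEF hc).trans (Submodule.map_mono ?_)
  exact le_iSup₂_of_le (i - 2) (by grind) (by push_cast; rfl)

/-- Let 𝔤 be a finite-dimensional Lie algebra over ℂ and let (h,e,f) be an sl₂-triple in 𝔤.
Then ad(e) maps ⊕_{i≥1} 𝔤_i onto ⊕_{i≥3} 𝔤_i, where 𝔤_i is the eigenspace of ad(h) with
eigenvalue i ∈ ℤ. -/
theorem ad_e_maps_pos_part_onto_high_part
    {L : Type*} [LieRing L] [LieAlgebra ℂ L] [FiniteDimensional ℂ L]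
    (h e f : L) (he : e ≠ 0)
    (hHE : ⁅h, e⁆ = (2 : ℂ) • e) (hHF : ⁅h, f⁆ = (-2 : ℂ) • f)
    (hEF : ⁅e, f⁆ = h)
    (Y : L)
    (hY : Y ∈ ⨆ i ∈ Set.Ici (3 : ℤ),
      Module.End.eigenspace (LieAlgebra.ad ℂ L h) (i : ℂ)) :
    ∃ Z ∈ ⨆ i ∈ Set.Ici (1 : ℤ),
      Module.End.eigenspace (LieAlgebra.ad ℂ L h) (i : ℂ), ⁅e, Z⁆ = Y :=
  ad_e_maps_pos_part_onto_high_part_general h e f hHE hHF hEF Y hY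
end

section
/- Let Δ = {α ∈ Φ⁺ : α is not the sum of two elements of Φ⁺} (the simple roots). Let v₁ be a linear automorphism of V with v₁(Φ) = Φ. Let Φ_L ⊆ Φ satisfy Φ_L = −Φ_L and f(v₁⁻¹(β)) > 0 for every β ∈ Φ_L with f(β) > 0, and let Φ_N ⊆ Φ⁺ satisfy v₁⁻¹(α) ∈ Δ for every α ∈ Φ_N. Define Φ⁺(V) = {γ ∈ Φ⁺ : γ = α + β for some α ∈ Φ_N and β ∈ Φ_L with f(β) > 0} and Φ⁻(V) = {γ ∈ Φ⁺ : γ = α + β for some α ∈ Φ_N and β ∈ Φ_L with f(β) < 0}. Then the three sets Φ⁻(V), Φ_N and Φ⁺(V) are pairwise disjoint. (This is the disjointness assertion underlying the paper's Lemma 'empty': 𝔤₂(λ) = V⁻ ⊕ ⊕_{α∈Φ_N} 𝔤_α ⊕ V.) -/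
/-!
Write `w = v₁⁻¹`; since `Φ_L = -Φ_L`, `w` sends both `β` and `-β` to positive roots for
`β ∈ Φ_L` of the appropriate sign. If `γ = α + β` with `α ∈ Φ_N`, then:
* for `β` negative, `w α = w γ + w (-β)` forces `w γ` to be a negative root, as `w α` is simple;
* for `β` positive, `w γ = w α + w β` is positive and not simple.
Each of the three intersections would contradict one of these two facts.
-/

section RootSubsets

variable {V : Type*} [AddCommGroup V] [Module ℝ V]

/-- The paper's `Δ` for the positive system `{γ ∈ Φ | 0 < f γ}`. -/
def simpleRoots (f : V →ₗ[ℝ] ℝ) (Φ : Set V) : Set V :=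
  {α ∈ Φ | 0 < f α ∧ ¬∃ β ∈ Φ, 0 < f β ∧ ∃ δ ∈ Φ, 0 < f δ ∧ α = β + δ}

lemma ne_add_of_mem_simpleRoots {f : V →ₗ[ℝ] ℝ} {Φ : Set V} {α β δ : V}
    (hα : α ∈ simpleRoots f Φ) (hβ : β ∈ Φ) (hβ_pos : 0 < f β) (hδ : δ ∈ Φ) (hδ_pos : 0 < f δ) :
    α ≠ β + δ :=
  fun h ↦ hα.2.2 ⟨β, hβ, hβ_pos, δ, hδ, hδ_pos, h⟩

variable {f : V →ₗ[ℝ] ℝ} {Φ ΦL ΦN : Set V} {v₁ : V ≃ₗ[ℝ] V}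
  (hv₁Φ : ⇑v₁ '' Φ = Φ) (hΦLΦ : ΦL ⊆ Φ) (hΦLsym : ∀ γ, γ ∈ ΦL ↔ -γ ∈ ΦL)
  (hv₁L : ∀ β ∈ ΦL, 0 < f β → 0 < f (v₁.symm β))
  (hΦNΔ : ∀ α ∈ ΦN, v₁.symm α ∈ simpleRoots f Φ)

include hv₁Φ in
lemma symm_mem_of_image_eq {x : V} (hx : x ∈ Φ) : v₁.symm x ∈ Φ := by
  rwa [← hv₁Φ, v₁.image_eq_preimage_symm] at hx

include hv₁Φ hΦLΦ hΦLsym hv₁L hΦNΔ in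
lemma not_pos_symm_add_of_neg {α β : V} (hα : α ∈ ΦN) (hβ : β ∈ ΦL) (hβ_neg : f β < 0)
    (hαβ : α + β ∈ Φ) : ¬ 0 < f (v₁.symm (α + β)) := by
  intro hpos
  have hβ' : -β ∈ ΦL := (hΦLsym β).1 hβ
  have hβ'_pos : 0 < f (v₁.symm (-β)) := hv₁L _ hβ' (by simpa using hβ_neg)
  refine ne_add_of_mem_simpleRoots (hΦNΔ α hα) (symm_mem_of_image_eq hv₁Φ hαβ) hpos
    (symm_mem_of_image_eq hv₁Φ (hΦLΦ hβ')) hβ'_pos ?_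
  rw [← map_add, add_neg_cancel_right]

include hv₁L hΦNΔ in
lemma pos_symm_add_of_pos {α β : V} (hα : α ∈ ΦN) (hβ : β ∈ ΦL) (hβ_pos : 0 < f β) :
    0 < f (v₁.symm (α + β)) := by
  rw [map_add, map_add]
  exact add_pos (hΦNΔ α hα).2.1 (hv₁L β hβ hβ_pos)

include hv₁Φ hΦLΦ hv₁L hΦNΔ in
lemma symm_add_notMem_simpleRoots {α β : V} (hα : α ∈ ΦN) (hβ : β ∈ ΦL) (hβ_pos : 0 < f β) :
    v₁.symm (α + β) ∉ simpleRoots f Φ := fun h ↦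
  ne_add_of_mem_simpleRoots h (hΦNΔ α hα).1 (hΦNΔ α hα).2.1
    (symm_mem_of_image_eq hv₁Φ (hΦLΦ hβ)) (hv₁L β hβ hβ_pos) (map_add _ _ _)

end RootSubsets

theorem weight_two_pieces_pairwise_disjoint_general
    {V : Type*} [AddCommGroup V] [Module ℝ V]
    (f : V →ₗ[ℝ] ℝ) (Φ : Set V)
    (v₁ : V ≃ₗ[ℝ] V) (hv₁Φ : ⇑v₁ '' Φ = Φ)
    (ΦL : Set V) (hΦLΦ : ΦL ⊆ Φ) (hΦLsym : ∀ γ, γ ∈ ΦL ↔ -γ ∈ ΦL)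
    (hv₁L : ∀ β ∈ ΦL, 0 < f β → 0 < f (v₁.symm β))
    (ΦN : Set V)
    (hΦNΔ : ∀ α ∈ ΦN, v₁.symm α ∈
      {α ∈ Φ | 0 < f α ∧
        ¬∃ β ∈ Φ, 0 < f β ∧ ∃ δ ∈ Φ, 0 < f δ ∧ α = β + δ}) :
    ({γ ∈ Φ | 0 < f γ ∧ ∃ α ∈ ΦN, ∃ β ∈ ΦL, f β < 0 ∧ γ = α + β} ∩ ΦN = ∅) ∧
    (ΦN ∩ {γ ∈ Φ | 0 < f γ ∧ ∃ α ∈ ΦN, ∃ β ∈ ΦL, 0 < f β ∧ γ = α + β} = ∅) ∧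
    ({γ ∈ Φ | 0 < f γ ∧ ∃ α ∈ ΦN, ∃ β ∈ ΦL, f β < 0 ∧ γ = α + β} ∩
      {γ ∈ Φ | 0 < f γ ∧ ∃ α ∈ ΦN, ∃ β ∈ ΦL, 0 < f β ∧ γ = α + β} = ∅) := by
  have hΔ : ∀ α ∈ ΦN, v₁.symm α ∈ simpleRoots f Φ := hΦNΔ
  refine ⟨?_, ?_, ?_⟩ <;> rw [Set.eq_empty_iff_forall_notMem]
  · rintro _ ⟨⟨hγ, -, α, hα, β, hβ, hβ_neg, rfl⟩, hγN⟩
    exact not_pos_symm_add_of_neg hv₁Φ hΦLΦ hΦLsym hv₁L hΔ hα hβ hβ_neg hγ (hΔ _ hγN).2.1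
  · rintro _ ⟨hγN, -, -, α, hα, β, hβ, hβ_pos, rfl⟩
    exact symm_add_notMem_simpleRoots hv₁Φ hΦLΦ hv₁L hΔ hα hβ hβ_pos (hΔ _ hγN)
  · rintro _ ⟨⟨hγ, -, α, hα, β, hβ, hβ_neg, rfl⟩, -, -, α', hα', β', hβ', hβ'_pos, heq⟩
    refine not_pos_symm_add_of_neg hv₁Φ hΦLΦ hΦLsym hv₁L hΔ hα hβ hβ_neg hγ ?_
    rw [heq]
    exact pos_symm_add_of_pos hv₁L hΔ hα' hβ' hβ'_pos

/-- Disjointness assertion underlying the paper's Lemma 'empty':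
with Δ the simple roots, v₁ ∈ W^L, Φ_L = −Φ_L the Levi roots, Φ_N ⊆ Φ⁺ with
v₁⁻¹(Φ_N) ⊆ Δ, the three sets Φ⁻(V), Φ_N and Φ⁺(V) are pairwise disjoint. -/
theorem weight_two_pieces_pairwise_disjoint
    {V : Type*} [AddCommGroup V] [Module ℝ V]
    (f : V →ₗ[ℝ] ℝ) (Φ : Set V) (hfin : Φ.Finite)
    (hreg : ∀ γ ∈ Φ, f γ ≠ 0)
    (v₁ : V ≃ₗ[ℝ] V) (hv₁Φ : ⇑v₁ '' Φ = Φ)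
    (ΦL : Set V) (hΦLΦ : ΦL ⊆ Φ) (hΦLsym : ∀ γ, γ ∈ ΦL ↔ -γ ∈ ΦL)
    (hv₁L : ∀ β ∈ ΦL, 0 < f β → 0 < f (v₁.symm β))
    (ΦN : Set V) (hΦN : ΦN ⊆ {γ ∈ Φ | 0 < f γ})
    (hΦNΔ : ∀ α ∈ ΦN, v₁.symm α ∈
      {α ∈ Φ | 0 < f α ∧
        ¬∃ β ∈ Φ, 0 < f β ∧ ∃ δ ∈ Φ, 0 < f δ ∧ α = β + δ}) :
    ({γ ∈ Φ | 0 < f γ ∧ ∃ α ∈ ΦN, ∃ β ∈ ΦL, f β < 0 ∧ γ = α + β} ∩ ΦN = ∅) ∧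
    (ΦN ∩ {γ ∈ Φ | 0 < f γ ∧ ∃ α ∈ ΦN, ∃ β ∈ ΦL, 0 < f β ∧ γ = α + β} = ∅) ∧
    ({γ ∈ Φ | 0 < f γ ∧ ∃ α ∈ ΦN, ∃ β ∈ ΦL, f β < 0 ∧ γ = α + β} ∩
      {γ ∈ Φ | 0 < f γ ∧ ∃ α ∈ ΦN, ∃ β ∈ ΦL, 0 < f β ∧ γ = α + β} = ∅) :=
  weight_two_pieces_pairwise_disjoint_general f Φ v₁ hv₁Φ ΦL hΦLΦ hΦLsym hv₁L ΦN hΦNΔ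
end

section
/- Assume moreover that Φ = −Φ. Let Φ_M ⊆ Φ satisfy Φ_M = −Φ_M, and let y and v be linear automorphisms of V with y(Φ) = Φ and v(Φ) = Φ such that: y(Φ_M) = Φ_M; Φ_y ⊆ Φ_M; and v⁻¹(β) ∈ Φ⁺ for every β ∈ Φ_M ∩ Φ⁺. Set w = y ∘ v. Let Φ_H ⊆ Φ satisfy Φ⁺ ⊆ Φ_H, and set Φ_H⁻ = Φ_H ∩ Φ⁻. Then {γ ∈ Φ⁺ \ Φ_M : w⁻¹(γ) ∉ Φ_H} = y(Φ_v) \ w(Φ_H⁻), and consequently |y(Φ_v)| − |{γ ∈ Φ⁺ \ Φ_M : w⁻¹(γ) ∉ Φ_H}| = |y(Φ_v) ∩ w(Φ_H⁻)|. (This is the combinatorial identity used in the paper's Corollary computing dimensions in the arbitrary case: |y(Φ_v)| − dim 𝔲_Q/(𝔲_Q ∩ ẇ·H) = |y(Φ_v) ∩ w(Φ_H⁻)|, where Φ(𝔲_Q) = Φ⁺ \ Φ_M.) -/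
/-!
Write `w⁻¹ γ = v⁻¹ (y⁻¹ γ)`. Since `Φ_y ⊆ Φ_M` and `Φ_M = -Φ_M`, the element `y` preserves the
sign of every root outside `Φ_M`; since `v⁻¹` keeps `Φ_M ∩ Φ⁺` positive and `y` preserves `Φ_M`,
the roots in `y(Φ_v)` lie outside `Φ_M`. So a positive root `γ ∉ Φ_M` has `w⁻¹ γ ∉ Φ_H ⊇ Φ⁺`
exactly when `y⁻¹ γ ∈ Φ_v` and `w⁻¹ γ` is not a negative root of `Φ_H`.
-/

namespace RootInversion

variable {V : Type*} [AddCommGroup V] [Module ℝ V] {f : V →ₗ[ℝ] ℝ} {Φ ΦM : Set V}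

def inversionSet (f : V →ₗ[ℝ] ℝ) (Φ : Set V) (w : V ≃ₗ[ℝ] V) : Set V :=
  {γ ∈ Φ | 0 < f γ ∧ w.symm γ ∈ Φ ∧ f (w.symm γ) < 0}

theorem symm_mem_of_image_eq {R M : Type*} [Semiring R] [AddCommMonoid M] [Module R M]
    {e : M ≃ₗ[R] M} {S : Set M} (h : e '' S = S) {γ : M}
    (hγ : γ ∈ S) : e.symm γ ∈ S := by
  rw [← h, e.image_eq_preimage_symm] at hγ
  exact hγ

theorem neg_of_not_pos (hreg : ∀ γ ∈ Φ, f γ ≠ 0) {γ : V} (hγ : γ ∈ Φ) (h : ¬ 0 < f γ) :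
    f γ < 0 :=
  lt_of_le_of_ne (not_lt.mp h) (hreg γ hγ)

theorem pos_symm_iff_pos_of_notMem (hreg : ∀ γ ∈ Φ, f γ ≠ 0) (hsym : ∀ γ, γ ∈ Φ ↔ -γ ∈ Φ)
    (hΦMsym : ∀ γ, γ ∈ ΦM ↔ -γ ∈ ΦM) {y : V ≃ₗ[ℝ] V} (hyΦ : ⇑y '' Φ = Φ)
    (hΦy : inversionSet f Φ y ⊆ ΦM) {γ : V} (hγ : γ ∈ Φ) (hγM : γ ∉ ΦM) :
    0 < f (y.symm γ) ↔ 0 < f γ := by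
  have hyγ : y.symm γ ∈ Φ := symm_mem_of_image_eq hyΦ hγ
  constructor
  · intro hpos
    by_contra hγpos
    have hneg := neg_of_not_pos hreg hγ hγpos
    apply hγM
    rw [hΦMsym]
    apply hΦy
    refine ⟨(hsym γ).1 hγ, ?_, ?_, ?_⟩ <;> simpa [← hsym]
  · intro hpos
    by_contra hyγpos
    exact hγM (hΦy ⟨hγ, hpos, hyγ, neg_of_not_pos hreg hyγ hyγpos⟩)

theorem apply_notMem_of_mem_inversionSet {y v : V ≃ₗ[ℝ] V} (hyM : ⇑y '' ΦM = ΦM)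
    (hv : ∀ β ∈ ΦM, 0 < f β → 0 < f (v.symm β)) {β : V} (hβ : β ∈ inversionSet f Φ v) :
    y β ∉ ΦM := by
  intro hM
  have hβM : β ∈ ΦM := by simpa using symm_mem_of_image_eq hyM hM
  linarith [hv β hβM hβ.2.1, hβ.2.2.2]

theorem setOf_pos_notMem_notMem_eq {y v : V ≃ₗ[ℝ] V} {ΦH : Set V}
    (hreg : ∀ γ ∈ Φ, f γ ≠ 0) (hsym : ∀ γ, γ ∈ Φ ↔ -γ ∈ Φ) (hΦMsym : ∀ γ, γ ∈ ΦM ↔ -γ ∈ ΦM)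
    (hyΦ : ⇑y '' Φ = Φ) (hvΦ : ⇑v '' Φ = Φ) (hyM : ⇑y '' ΦM = ΦM)
    (hΦy : inversionSet f Φ y ⊆ ΦM) (hv : ∀ β ∈ ΦM, 0 < f β → 0 < f (v.symm β))
    (hplus : {γ ∈ Φ | 0 < f γ} ⊆ ΦH) :
    {γ ∈ Φ | 0 < f γ ∧ γ ∉ ΦM ∧ (v.trans y).symm γ ∉ ΦH}
      = ⇑y '' inversionSet f Φ v \ ⇑(v.trans y) '' (ΦH ∩ {γ ∈ Φ | f γ < 0}) := by
  have hw : ∀ γ, (v.trans y).symm γ = v.symm (y.symm γ) := fun _ ↦ rfl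
  ext γ
  constructor
  · rintro ⟨hγ, hγpos, hγM, hγH⟩
    have hβ : y.symm γ ∈ Φ := symm_mem_of_image_eq hyΦ hγ
    have hwγ : v.symm (y.symm γ) ∈ Φ := symm_mem_of_image_eq hvΦ hβ
    have hwγneg : f (v.symm (y.symm γ)) < 0 :=
      neg_of_not_pos hreg hwγ fun hpos ↦ hγH (hplus ⟨hwγ, hpos⟩)
    refine ⟨⟨y.symm γ, ?_, y.apply_symm_apply γ⟩, ?_⟩
    · exact ⟨hβ, (pos_symm_iff_pos_of_notMem hreg hsym hΦMsym hyΦ hΦy hγ hγM).2 hγpos, hwγ,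
        hwγneg⟩
    · rintro ⟨δ, hδ, rfl⟩
      exact hγH (by simpa using hδ.1)
  · rintro ⟨⟨β, hβ, rfl⟩, hnw⟩
    have hyβM := apply_notMem_of_mem_inversionSet hyM hv hβ
    have hyβ : y β ∈ Φ := hyΦ ▸ Set.mem_image_of_mem y hβ.1
    refine ⟨hyβ, ?_, hyβM, fun hH ↦ hnw ⟨v.symm β, ⟨?_, hβ.2.2⟩, ?_⟩⟩
    · have hpos : 0 < f (y.symm (y β)) := by simpa using hβ.2.1
      exact (pos_symm_iff_pos_of_notMem hreg hsym hΦMsym hyΦ hΦy hyβ hyβM).1 hpos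
    · simpa [hw] using hH
    · simp

end RootInversion

theorem arbitrary_cell_dimension_combinatorics_general
    {V : Type*} [AddCommGroup V] [Module ℝ V]
    (f : V →ₗ[ℝ] ℝ) (Φ : Set V) (hfin : Φ.Finite)
    (hreg : ∀ γ ∈ Φ, f γ ≠ 0)
    (hsym : ∀ γ, γ ∈ Φ ↔ -γ ∈ Φ)
    (ΦM : Set V) (hΦMsym : ∀ γ, γ ∈ ΦM ↔ -γ ∈ ΦM)
    (y v : V ≃ₗ[ℝ] V)
    (hyΦ : ⇑y '' Φ = Φ) (hvΦ : ⇑v '' Φ = Φ)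
    (hyM : ⇑y '' ΦM = ΦM)
    (hΦy : {γ | γ ∈ Φ ∧ 0 < f γ ∧ y.symm γ ∈ Φ ∧ f (y.symm γ) < 0} ⊆ ΦM)
    (hv : ∀ β ∈ ΦM, 0 < f β → v.symm β ∈ Φ ∧ 0 < f (v.symm β))
    (w : V ≃ₗ[ℝ] V) (hwdef : w = v.trans y)
    (ΦH : Set V)
    (hplus : {γ ∈ Φ | 0 < f γ} ⊆ ΦH)
    (ΦHminus : Set V)
    (hΦHminusdef : ΦHminus = ΦH ∩ {γ ∈ Φ | f γ < 0})
    (Φv : Set V)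
    (hΦvdef : Φv = {γ ∈ Φ | 0 < f γ ∧ v.symm γ ∈ Φ ∧ f (v.symm γ) < 0}) :
    ({γ ∈ Φ | 0 < f γ ∧ γ ∉ ΦM ∧ w.symm γ ∉ ΦH} = (⇑y '' Φv) \ (⇑w '' ΦHminus)) ∧
    ((⇑y '' Φv).ncard - {γ ∈ Φ | 0 < f γ ∧ γ ∉ ΦM ∧ w.symm γ ∉ ΦH}.ncard
        = (⇑y '' Φv ∩ ⇑w '' ΦHminus).ncard) := by
  subst hwdef hΦHminusdef hΦvdef
  have hset := RootInversion.setOf_pos_notMem_notMem_eq hreg hsym hΦMsym hyΦ hvΦ hyM hΦy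
    (fun β hβ hpos ↦ (hv β hβ hpos).2) hplus
  refine ⟨hset, ?_⟩
  have hfin' : (⇑y '' RootInversion.inversionSet f Φ v).Finite :=
    (hfin.subset fun _ h ↦ h.1).image y
  rw [hset]
  exact Nat.sub_eq_of_eq_add (Set.ncard_inter_add_ncard_sdiff_eq_ncard _ _ hfin').symm

/-- Combinatorial identity used in the paper's Corollary computing cell dimensions in the
arbitrary case: with w = y ∘ v for y ∈ W_M and v ∈ W^M, and Φ(𝔲_Q) = Φ⁺ \ Φ_M,
{γ ∈ Φ⁺ \ Φ_M : w⁻¹(γ) ∉ Φ_H} = y(Φ_v) \ w(Φ_H⁻), and hence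
|y(Φ_v)| − |{γ ∈ Φ⁺ \ Φ_M : w⁻¹(γ) ∉ Φ_H}| = |y(Φ_v) ∩ w(Φ_H⁻)|. -/
theorem arbitrary_cell_dimension_combinatorics
    {V : Type*} [AddCommGroup V] [Module ℝ V]
    (f : V →ₗ[ℝ] ℝ) (Φ : Set V) (hfin : Φ.Finite)
    (hreg : ∀ γ ∈ Φ, f γ ≠ 0)
    (hsym : ∀ γ, γ ∈ Φ ↔ -γ ∈ Φ)
    (ΦM : Set V) (hΦMΦ : ΦM ⊆ Φ) (hΦMsym : ∀ γ, γ ∈ ΦM ↔ -γ ∈ ΦM)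
    (y v : V ≃ₗ[ℝ] V)
    (hyΦ : ⇑y '' Φ = Φ) (hvΦ : ⇑v '' Φ = Φ)
    (hyM : ⇑y '' ΦM = ΦM)
    (hΦy : {γ | γ ∈ Φ ∧ 0 < f γ ∧ y.symm γ ∈ Φ ∧ f (y.symm γ) < 0} ⊆ ΦM)
    (hv : ∀ β ∈ ΦM, 0 < f β → v.symm β ∈ Φ ∧ 0 < f (v.symm β))
    (w : V ≃ₗ[ℝ] V) (hwdef : w = v.trans y)
    (ΦH : Set V) (hΦHΦ : ΦH ⊆ Φ)
    (hplus : {γ ∈ Φ | 0 < f γ} ⊆ ΦH)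
    (ΦHminus : Set V)
    (hΦHminusdef : ΦHminus = ΦH ∩ {γ ∈ Φ | f γ < 0})
    (Φv : Set V)
    (hΦvdef : Φv = {γ ∈ Φ | 0 < f γ ∧ v.symm γ ∈ Φ ∧ f (v.symm γ) < 0}) :
    ({γ ∈ Φ | 0 < f γ ∧ γ ∉ ΦM ∧ w.symm γ ∉ ΦH} = (⇑y '' Φv) \ (⇑w '' ΦHminus)) ∧
    ((⇑y '' Φv).ncard - {γ ∈ Φ | 0 < f γ ∧ γ ∉ ΦM ∧ w.symm γ ∉ ΦH}.ncard
        = (⇑y '' Φv ∩ ⇑w '' ΦHminus).ncard) :=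
  arbitrary_cell_dimension_combinatorics_general f Φ hfin hreg hsym ΦM hΦMsym y v hyΦ hvΦ hyM hΦy hv
    w hwdef ΦH hplus ΦHminus hΦHminusdef Φv hΦvdef
end
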